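/- Let p be log-Hölder continuous on ℝⁿ with p⁺ < ∞ and let m > 0. There exists c₁ > 0, depending only on m, the log-Hölder constant of p, and p⁺, such that for every cube (or ball) Q with ℓ(Q) ≤ 1, every x ∈ Q, every a ≥ 0, and every f ∈ L¹(Q) with a + ⨍_Q |f| dy ≤ |Q|^{−m}, one has φ_a(x, ⨍_Q |f| dy) ≤ c₁ ⨍_Q φ_a(y, |f(y)|) dy + c₁ |Q|^m. -/

import Mathlib

/-!
Put `s = ⨍_Q |f| / 2` and `ε = |Q|^m`; doubling of `φ_a(x,·)` reduces the claim to
`φ_a(x,s)`. For `x, y ∈ Q` log-Hölder continuity bounds `r^{p(x)-p(y)}` uniformly for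
`r ∈ [ε, ε⁻¹]`, so the integrands of `φ_a(x,s)` and `φ_a(y,s)` are comparable where
`a + τ ≥ ε`, while the range `a + τ < ε` contributes at most `p⁺ ε`; hence
`φ_a(x,s) ≤ C φ_a(y,s) + p⁺ ε`. As `φ_a(y,·)` is superlinear, `B = (φ_a(x,s) - p⁺ ε)⁺`
satisfies `B (|f(y)|/s - 1) ≤ C φ_a(y,|f(y)|)`, and averaging over `Q` gives
`B ≤ C ⨍_Q φ_a(y,|f(y)|) dy`.
-/

open MeasureTheory

/-- The shifted Orlicz function `φ_a(x,t)` associated with `φ(x,t) = t^{p(x)}`: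
`φ_a(x,t) = ∫₀ᵗ (φ'(x, a+τ)/(a+τ)) τ dτ = ∫₀ᵗ p(x) (a+τ)^{p(x)−2} τ dτ`. -/
noncomputable def phiShift {n : ℕ} (p : (Fin n → ℝ) → ℝ) (a : ℝ)
    (x : Fin n → ℝ) (t : ℝ) : ℝ :=
  ∫ τ in (0:ℝ)..t, p x * (a + τ) ^ (p x - 2) * τ

open Set

noncomputable def shiftedPowerDeriv (q a τ : ℝ) : ℝ := q * (a + τ) ^ (q - 2) * τ

noncomputable def shiftedPower (q a t : ℝ) : ℝ := ∫ τ in (0:ℝ)..t, shiftedPowerDeriv q a τ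

lemma phiShift_eq_shiftedPower {n : ℕ} (p : (Fin n → ℝ) → ℝ) (a : ℝ) (x : Fin n → ℝ)
    (t : ℝ) : phiShift p a x t = shiftedPower (p x) a t := rfl

section ShiftedPower

open intervalIntegral

lemma integral_le_const_mul_integral_add {f g : ℝ → ℝ} {u v C c : ℝ} (huv : u ≤ v)
    (hf : IntervalIntegrable f volume u v) (hg : IntervalIntegrable g volume u v)
    (h : ∀ τ ∈ Icc u v, f τ ≤ C * g τ + c) :
    ∫ τ in u..v, f τ ≤ C * (∫ τ in u..v, g τ) + c * (v - u) := by
  calc ∫ τ in u..v, f τ ≤ ∫ τ in u..v, (C * g τ + c) :=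
        integral_mono_on huv hf ((hg.const_mul C).add intervalIntegrable_const) h
    _ = C * (∫ τ in u..v, g τ) + c * (v - u) := by
        rw [integral_add (hg.const_mul C) intervalIntegrable_const,
          intervalIntegral.integral_const_mul, intervalIntegral.integral_const, smul_eq_mul,
          mul_comm c]

section

variable {q a : ℝ}

lemma shiftedPowerDeriv_nonneg (hq : 0 ≤ q) (ha : 0 ≤ a) {τ : ℝ} (hτ : 0 ≤ τ) :
    0 ≤ shiftedPowerDeriv q a τ := by
  unfold shiftedPowerDeriv; positivity

/-- `(a+τ)^(q-2) τ = (a+τ)^(q-1) · τ/(a+τ)` is a product of two nondecreasing factors. -/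
lemma shiftedPowerDeriv_monotoneOn (hq : 1 ≤ q) (ha : 0 ≤ a) :
    MonotoneOn (shiftedPowerDeriv q a) (Ici 0) := by
  intro u (hu : 0 ≤ u) v (hv : 0 ≤ v) huv
  rcases (add_nonneg ha hu).eq_or_lt with hau | hau
  · obtain rfl : u = 0 := by linarith
    simpa [shiftedPowerDeriv] using shiftedPowerDeriv_nonneg (by linarith) ha hv
  have hav : 0 < a + v := by linarith
  have factor : ∀ w, 0 < a + w → (a + w) ^ (q - 2) * w = (a + w) ^ (q - 1) * (w / (a + w)) :=
    fun w hw => by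
      rw [show q - 1 = q - 2 + 1 by ring, Real.rpow_add_one hw.ne']
      field_simp
  have hfrac : u / (a + u) ≤ v / (a + v) := by
    rw [div_le_div_iff₀ hau hav]; nlinarith
  unfold shiftedPowerDeriv
  rw [mul_assoc, mul_assoc, factor u hau, factor v hav]
  gcongr

lemma intervalIntegrable_shiftedPowerDeriv_comp_mul (hq : 1 ≤ q) (ha : 0 ≤ a) {c u v : ℝ}
    (hc : 0 ≤ c) (hu : 0 ≤ u) (hv : 0 ≤ v) :
    IntervalIntegrable (fun τ => shiftedPowerDeriv q a (c * τ)) volume u v := by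
  refine MonotoneOn.intervalIntegrable fun τ hτ σ hσ hτσ => ?_
  have h0 : ∀ ρ ∈ uIcc u v, 0 ≤ ρ := fun ρ hρ => le_trans (le_inf hu hv) hρ.1
  exact shiftedPowerDeriv_monotoneOn hq ha (mul_nonneg hc (h0 τ hτ)) (mul_nonneg hc (h0 σ hσ))
    (mul_le_mul_of_nonneg_left hτσ hc)

lemma intervalIntegrable_shiftedPowerDeriv (hq : 1 ≤ q) (ha : 0 ≤ a) {u v : ℝ}
    (hu : 0 ≤ u) (hv : 0 ≤ v) : IntervalIntegrable (shiftedPowerDeriv q a) volume u v := by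
  simpa using intervalIntegrable_shiftedPowerDeriv_comp_mul hq ha zero_le_one hu hv

lemma shiftedPower_zero : shiftedPower q a 0 = 0 := integral_same

lemma shiftedPower_nonneg (hq : 0 ≤ q) (ha : 0 ≤ a) {t : ℝ} (ht : 0 ≤ t) :
    0 ≤ shiftedPower q a t :=
  integral_nonneg ht fun _ hτ => shiftedPowerDeriv_nonneg hq ha hτ.1

lemma shiftedPower_mul (c t : ℝ) :
    shiftedPower q a (c * t) = c * ∫ τ in (0:ℝ)..t, shiftedPowerDeriv q a (c * τ) := by
  rw [mul_integral_comp_mul_left, mul_zero, shiftedPower]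

lemma shiftedPower_mul_le (hq : 1 ≤ q) (ha : 0 ≤ a) {c t : ℝ} (hc₀ : 0 ≤ c) (hc₁ : c ≤ 1)
    (ht : 0 ≤ t) : shiftedPower q a (c * t) ≤ c * shiftedPower q a t := by
  rw [shiftedPower_mul]
  refine mul_le_mul_of_nonneg_left (integral_mono_on ht
    (intervalIntegrable_shiftedPowerDeriv_comp_mul hq ha hc₀ le_rfl ht)
    (intervalIntegrable_shiftedPowerDeriv hq ha le_rfl ht) fun τ hτ => ?_) hc₀
  exact shiftedPowerDeriv_monotoneOn hq ha (mul_nonneg hc₀ hτ.1) hτ.1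
    (mul_le_of_le_one_left hτ.1 hc₁)

lemma shiftedPowerDeriv_two_mul_le (hq : 1 ≤ q) (ha : 0 ≤ a) {τ : ℝ} (hτ : 0 ≤ τ) :
    shiftedPowerDeriv q a (2 * τ) ≤ 2 * 2 ^ q * shiftedPowerDeriv q a τ := by
  rcases (add_nonneg ha hτ).eq_or_lt with hτa | hτa
  · obtain rfl : τ = 0 := by linarith
    simp [shiftedPowerDeriv]
  have hbase : (a + 2 * τ) ^ (q - 2) ≤ 2 ^ q * (a + τ) ^ (q - 2) := by
    rcases le_total 2 q with h2q | hq2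
    · calc (a + 2 * τ) ^ (q - 2) ≤ (2 * (a + τ)) ^ (q - 2) := by gcongr; linarith
        _ = 2 ^ (q - 2) * (a + τ) ^ (q - 2) := Real.mul_rpow zero_le_two hτa.le
        _ ≤ 2 ^ q * (a + τ) ^ (q - 2) := by gcongr <;> linarith
    · calc (a + 2 * τ) ^ (q - 2) ≤ (a + τ) ^ (q - 2) :=
            Real.rpow_le_rpow_of_nonpos hτa (by linarith) (by linarith)
        _ ≤ 2 ^ q * (a + τ) ^ (q - 2) :=
            le_mul_of_one_le_left (by positivity) (Real.one_le_rpow one_le_two (by linarith))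
  unfold shiftedPowerDeriv
  calc q * (a + 2 * τ) ^ (q - 2) * (2 * τ) = 2 * (q * τ) * (a + 2 * τ) ^ (q - 2) := by ring
    _ ≤ 2 * (q * τ) * (2 ^ q * (a + τ) ^ (q - 2)) := by gcongr
    _ = 2 * 2 ^ q * (q * (a + τ) ^ (q - 2) * τ) := by ring

lemma shiftedPower_two_mul_le (hq : 1 ≤ q) (ha : 0 ≤ a) {t : ℝ} (ht : 0 ≤ t) :
    shiftedPower q a (2 * t) ≤ 4 * 2 ^ q * shiftedPower q a t := by
  have h := integral_le_const_mul_integral_add ht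
    (intervalIntegrable_shiftedPowerDeriv_comp_mul hq ha zero_le_two le_rfl ht)
    (intervalIntegrable_shiftedPowerDeriv hq ha le_rfl ht)
    (fun τ hτ => (shiftedPowerDeriv_two_mul_le hq ha hτ.1).trans (le_add_of_nonneg_right le_rfl))
  rw [zero_mul, add_zero] at h
  rw [shiftedPower_mul, shiftedPower]
  linarith

lemma mul_div_sub_one_le_mul_shiftedPower (hq : 1 ≤ q) (ha : 0 ≤ a) {s u B C : ℝ}
    (hs : 0 < s) (hu : 0 ≤ u) (hB : 0 ≤ B) (hC : 0 ≤ C)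
    (hBs : B ≤ C * shiftedPower q a s) : B * (u / s - 1) ≤ C * shiftedPower q a u := by
  have hφu : 0 ≤ C * shiftedPower q a u :=
    mul_nonneg hC (shiftedPower_nonneg (by linarith) ha hu)
  rcases le_or_gt u s with hus | hsu
  · have : u / s - 1 ≤ 0 := by rw [sub_nonpos, div_le_one hs]; exact hus
    nlinarith
  have hu0 : 0 < u := hs.trans hsu
  have hscale : shiftedPower q a s ≤ s / u * shiftedPower q a u := by
    simpa [div_mul_cancel₀ s hu0.ne'] using
      shiftedPower_mul_le hq ha (div_nonneg hs.le hu) ((div_le_one hu0).2 hsu.le) hu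
  calc B * (u / s - 1) ≤ B * (u / s) := by nlinarith
    _ ≤ C * (s / u * shiftedPower q a u) * (u / s) := by gcongr; exact hBs.trans (by gcongr)
    _ = C * shiftedPower q a u := by field_simp

lemma shiftedPowerDeriv_le_of_add_le_one (hq : 1 ≤ q) (ha : 0 ≤ a) {τ : ℝ} (hτ : 0 ≤ τ)
    (h1 : a + τ ≤ 1) : shiftedPowerDeriv q a τ ≤ q := by
  rcases (add_nonneg ha hτ).eq_or_lt with hτa | hτa
  · obtain rfl : τ = 0 := by linarith
    simp [shiftedPowerDeriv]; linarith
  calc shiftedPowerDeriv q a τ ≤ q * (a + τ) ^ (q - 2) * (a + τ) := by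
        unfold shiftedPowerDeriv; gcongr; linarith
    _ = q * (a + τ) ^ (q - 1) := by
        rw [mul_assoc, ← Real.rpow_add_one hτa.ne']; ring_nf
    _ ≤ q * 1 :=
        mul_le_mul_of_nonneg_left (Real.rpow_le_one hτa.le h1 (by linarith)) (by linarith)
    _ = q := mul_one q

end

lemma shiftedPowerDeriv_le_of_rpow_sub_le {q₁ q₂ P K a τ : ℝ} (hq₁ : 0 ≤ q₁) (hq₁P : q₁ ≤ P)
    (hq₂ : 1 ≤ q₂) (hτ : 0 ≤ τ) (hτa : 0 < a + τ) (hK : (a + τ) ^ (q₁ - q₂) ≤ K) :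
    shiftedPowerDeriv q₁ a τ ≤ P * K * shiftedPowerDeriv q₂ a τ := by
  have hw : 0 ≤ (a + τ) ^ (q₂ - 2) * τ := by positivity
  have hP : 0 ≤ P := hq₁.trans hq₁P
  have hK0 : 0 ≤ K := (Real.rpow_nonneg hτa.le _).trans hK
  unfold shiftedPowerDeriv
  calc q₁ * (a + τ) ^ (q₁ - 2) * τ = q₁ * (a + τ) ^ (q₁ - q₂) * ((a + τ) ^ (q₂ - 2) * τ) := by
        rw [show q₁ - 2 = (q₁ - q₂) + (q₂ - 2) by ring, Real.rpow_add hτa]; ring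
    _ ≤ P * K * (1 * ((a + τ) ^ (q₂ - 2) * τ)) := by rw [one_mul]; gcongr
    _ ≤ P * K * (q₂ * ((a + τ) ^ (q₂ - 2) * τ)) := by gcongr
    _ = P * K * (q₂ * (a + τ) ^ (q₂ - 2) * τ) := by ring

lemma shiftedPower_le_of_rpow_sub_le {q₁ q₂ P K a s ε R : ℝ} (hq₁ : 1 ≤ q₁) (hq₁P : q₁ ≤ P)
    (hq₂ : 1 ≤ q₂) (ha : 0 ≤ a) (hs : 0 ≤ s) (hε : 0 < ε) (hε₁ : ε ≤ 1) (hK0 : 0 ≤ K)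
    (hasR : a + s ≤ R) (hK : ∀ r, ε ≤ r → r ≤ R → r ^ (q₁ - q₂) ≤ K) :
    shiftedPower q₁ a s ≤ P * K * shiftedPower q₂ a s + P * ε := by
  have hP : 0 ≤ P := by linarith
  have far : ∀ τ ∈ Icc 0 s, ε ≤ a + τ →
      shiftedPowerDeriv q₁ a τ ≤ P * K * shiftedPowerDeriv q₂ a τ := fun τ hτ h =>
    shiftedPowerDeriv_le_of_rpow_sub_le (by linarith) hq₁P hq₂ hτ.1 (hε.trans_le h)
      (hK _ h (by linarith [hτ.2]))
  have near : ∀ τ ∈ Icc 0 s,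
      shiftedPowerDeriv q₁ a τ ≤ P * K * shiftedPowerDeriv q₂ a τ + P := by
    intro τ hτ
    have hφ₂ : 0 ≤ P * K * shiftedPowerDeriv q₂ a τ :=
      mul_nonneg (mul_nonneg hP hK0) (shiftedPowerDeriv_nonneg (by linarith) ha hτ.1)
    rcases lt_or_ge (a + τ) ε with h | h
    · linarith [shiftedPowerDeriv_le_of_add_le_one hq₁ ha hτ.1 (by linarith)]
    · linarith [far τ hτ h]
  have hint₁ : ∀ {u v : ℝ}, 0 ≤ u → 0 ≤ v →
      IntervalIntegrable (shiftedPowerDeriv q₁ a) volume u v :=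
    intervalIntegrable_shiftedPowerDeriv hq₁ ha
  have hint₂ : ∀ {u v : ℝ}, 0 ≤ u → 0 ≤ v →
      IntervalIntegrable (shiftedPowerDeriv q₂ a) volume u v :=
    intervalIntegrable_shiftedPowerDeriv hq₂ ha
  rcases le_total s ε with hsε | hεs
  · have := integral_le_const_mul_integral_add hs (hint₁ le_rfl hs) (hint₂ le_rfl hs) near
    unfold shiftedPower
    nlinarith
  · have h₀ := integral_le_const_mul_integral_add hε.le (hint₁ le_rfl hε.le)
      (hint₂ le_rfl hε.le) fun τ hτ => near τ ⟨hτ.1, hτ.2.trans hεs⟩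
    have h₁ := integral_le_const_mul_integral_add hεs (hint₁ hε.le hs) (hint₂ hε.le hs)
      fun τ hτ => by
        rw [add_zero]
        exact far τ ⟨hε.le.trans hτ.1, hτ.2⟩ (by linarith [hτ.1])
    unfold shiftedPower
    rw [← integral_add_adjacent_intervals (hint₁ le_rfl hε.le) (hint₁ hε.le hs),
      ← integral_add_adjacent_intervals (hint₂ le_rfl hε.le) (hint₂ hε.le hs)]
    linarith

end ShiftedPower

lemma rpow_sub_le_exp_of_logHolder {X : Type*} [MetricSpace X] {p : X → ℝ} {clog : ℝ}
    (hlog : ∀ x y, x ≠ y → |p x - p y| ≤ clog / Real.log (Real.exp 1 + 1 / dist x y))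
    {x y : X} {ℓ M r : ℝ} (hℓ : 0 < ℓ) (hxy : dist x y ≤ ℓ) (hM : 0 ≤ M)
    (hr₁ : ℓ ^ M ≤ r) (hr₂ : r ≤ (ℓ ^ M)⁻¹) :
    r ^ (p x - p y) ≤ Real.exp (|clog| * M) := by
  have hℓM : 0 < ℓ ^ M := Real.rpow_pos_of_pos hℓ M
  have hr : 0 < r := hℓM.trans_le hr₁
  rw [Real.rpow_def_of_pos hr, Real.exp_le_exp]
  rcases eq_or_ne x y with rfl | hne
  · simpa using mul_nonneg (abs_nonneg clog) hM
  have hd : 0 < dist x y := dist_pos.2 hne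
  set L := Real.log (Real.exp 1 + 1 / dist x y)
  have hL : 1 ≤ L := by
    rw [← Real.log_exp 1]
    exact Real.log_le_log (Real.exp_pos 1) (by linarith [one_div_pos.2 hd])
  have hlogℓ : Real.log ℓ⁻¹ ≤ L := by
    refine Real.log_le_log (inv_pos.2 hℓ) ?_
    linarith [Real.exp_pos 1, one_div_le_one_div_of_le hd hxy, one_div ℓ]
  have hlogr : |Real.log r| ≤ M * L := by
    have hup := Real.log_le_log hr hr₂
    have hlow := Real.log_le_log hℓM hr₁
    rw [Real.log_inv, Real.log_rpow hℓ] at hup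
    rw [Real.log_rpow hℓ] at hlow
    rw [Real.log_inv] at hlogℓ
    exact abs_le.2 ⟨by nlinarith, by nlinarith⟩
  have hclog : 0 ≤ clog / L := (abs_nonneg _).trans (hlog x y hne)
  calc Real.log r * (p x - p y) ≤ |p x - p y| * |Real.log r| := by
        rw [mul_comm, ← abs_mul]; exact le_abs_self _
    _ ≤ clog / L * (M * L) := mul_le_mul (hlog x y hne) hlogr (abs_nonneg _) hclog
    _ = clog * M := by field_simp
    _ ≤ |clog| * M := mul_le_mul_of_nonneg_right (le_abs_self _) hM

lemma shiftedPower_le_of_logHolder {X : Type*} [MetricSpace X] {p : X → ℝ} {clog P : ℝ}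
    (hlog : ∀ x y, x ≠ y → |p x - p y| ≤ clog / Real.log (Real.exp 1 + 1 / dist x y))
    (hp : ∀ x, 1 ≤ p x) (hpP : ∀ x, p x ≤ P) {x y : X} {ℓ M a s : ℝ} (hℓ : 0 < ℓ)
    (hxy : dist x y ≤ ℓ) (hM : 0 ≤ M) (hℓM : ℓ ^ M ≤ 1) (ha : 0 ≤ a) (hs : 0 ≤ s)
    (has : a + s ≤ (ℓ ^ M)⁻¹) :
    shiftedPower (p x) a s ≤
      P * Real.exp (|clog| * M) * shiftedPower (p y) a s + P * ℓ ^ M :=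
  shiftedPower_le_of_rpow_sub_le (hp x) (hpP x) (hp y) ha hs (Real.rpow_pos_of_pos hℓ M) hℓM
    (Real.exp_pos _).le has fun _ hr₁ hr₂ =>
      rpow_sub_le_exp_of_logHolder hlog hℓ hxy hM hr₁ hr₂

lemma average_nonneg {α : Type*} [MeasurableSpace α] {μ : Measure α} {f : α → ℝ}
    (hf : ∀ y, 0 ≤ f y) : 0 ≤ ⨍ y, f y ∂μ :=
  integral_nonneg hf

lemma le_mul_average_shiftedPower_add {α : Type*} [MeasurableSpace α] {μ : Measure α}
    [IsFiniteMeasure μ] [NeZero μ] {q : α → ℝ} (hq : ∀ y, 1 ≤ q y) {a A C E : ℝ} {g : α → ℝ}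
    (ha : 0 ≤ a) (hC : 0 ≤ C) (hg₀ : ∀ y, 0 ≤ g y) (hg : Integrable g μ)
    (hφg : Integrable (fun y => shiftedPower (q y) a (g y)) μ)
    (hA : ∀ᵐ y ∂μ, A ≤ C * shiftedPower (q y) a ((⨍ y, g y ∂μ) / 2) + E) :
    A ≤ C * ⨍ y, shiftedPower (q y) a (g y) ∂μ + E := by
  have ht₀ : 0 ≤ ⨍ y, g y ∂μ := average_nonneg hg₀
  set t := ⨍ y, g y ∂μ
  set B := max (A - E) 0
  have hφ₀ : ∀ y u, 0 ≤ u → 0 ≤ shiftedPower (q y) a u := fun y _ hu =>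
    shiftedPower_nonneg (by linarith [hq y]) ha hu
  have hB : ∀ᵐ y ∂μ, B ≤ C * shiftedPower (q y) a (t / 2) := hA.mono fun y hy =>
    max_le (by linarith) (mul_nonneg hC (hφ₀ y _ (by positivity)))
  have hφavg : 0 ≤ C * ⨍ y, shiftedPower (q y) a (g y) ∂μ :=
    mul_nonneg hC (average_nonneg fun y => hφ₀ y _ (hg₀ y))
  suffices B ≤ C * ⨍ y, shiftedPower (q y) a (g y) ∂μ by linarith [le_max_left (A - E) 0]
  rcases ht₀.eq_or_lt with ht | ht
  · obtain ⟨y, hy⟩ := hB.exists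
    rw [← ht, zero_div, shiftedPower_zero, mul_zero] at hy
    linarith
  set ν := (μ univ)⁻¹ • μ
  have hν : ∀ {f : α → ℝ}, Integrable f μ → Integrable f ν := fun hf =>
    hf.smul_measure (ENNReal.inv_ne_top.2 (NeZero.ne (μ univ)))
  have hpt : ∀ᵐ y ∂ν, B * (g y / (t / 2) - 1) ≤ C * shiftedPower (q y) a (g y) :=
    Measure.ae_smul_measure (hB.mono fun y hy => mul_div_sub_one_le_mul_shiftedPower (hq y) ha
      (by positivity) (hg₀ y) (le_max_right _ _) hC hy) _
  have hlin : ∫ y, B * (g y / (t / 2) - 1) ∂ν = B := by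
    rw [integral_const_mul, integral_sub ((hν hg).div_const _) (integrable_const 1),
      integral_div, integral_const, probReal_univ, one_smul]
    change B * (t / (t / 2) - 1) = B
    field_simp; ring
  calc B = ∫ y, B * (g y / (t / 2) - 1) ∂ν := hlin.symm
    _ ≤ ∫ y, C * shiftedPower (q y) a (g y) ∂ν :=
        integral_mono_ae ((((hν hg).div_const _).sub (integrable_const 1)).const_mul B)
          ((hν hφg).const_mul C) hpt
    _ = C * ⨍ y, shiftedPower (q y) a (g y) ∂μ := integral_const_mul C _

/-- shifted key estimate, Thm. 2.5 in [BrDiSc]. Let `p` be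
log-Hölder continuous with `p⁺ < ∞` and `m > 0`. Then there is `c₁ > 0`
(depending only on `m`, the log-Hölder constant, and `p⁺`) such that for every
cube `Q` (sup-metric ball of side `ℓ ≤ 1`, volume `ℓ^n`), every `x ∈ Q`, every
`a ≥ 0` and every `f ∈ L¹(Q)` with `a + ⨍_Q |f| ≤ |Q|^{−m}`:
`φ_a(x, ⨍_Q |f|) ≤ c₁ ⨍_Q φ_a(y, |f(y)|) dy + c₁ |Q|^m`. -/
theorem statement18 (n : ℕ) (p : (Fin n → ℝ) → ℝ) (clog pplus : ℝ)
    (hp1 : ∀ x, 1 ≤ p x) (hpp : ∀ x, p x ≤ pplus)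
    (hlog : ∀ x y, x ≠ y →
      |p x - p y| ≤ clog / Real.log (Real.exp 1 + 1 / dist x y))
    (m : ℝ) (hm : 0 < m) :
    ∃ c₁ > 0, ∀ (z : Fin n → ℝ) (ℓ : ℝ), 0 < ℓ → ℓ ≤ 1 →
      ∀ x ∈ Metric.closedBall z (ℓ / 2), ∀ a ≥ (0:ℝ),
      ∀ f : (Fin n → ℝ) → ℝ,
        IntegrableOn f (Metric.closedBall z (ℓ / 2)) volume →
        IntegrableOn (fun y => phiShift p a y |f y|)
          (Metric.closedBall z (ℓ / 2)) volume →
        a + (⨍ y in Metric.closedBall z (ℓ / 2), |f y| ∂volume) ≤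
          ((ℓ ^ n : ℝ)) ^ (-m) →
        phiShift p a x (⨍ y in Metric.closedBall z (ℓ / 2), |f y| ∂volume) ≤
          c₁ * ⨍ y in Metric.closedBall z (ℓ / 2), phiShift p a y |f y| ∂volume
            + c₁ * ((ℓ ^ n : ℝ)) ^ m := by
  have hP : 1 ≤ pplus := (hp1 0).trans (hpp 0)
  set K := Real.exp (|clog| * (n * m))
  have hK : 1 ≤ K := Real.one_le_exp (by positivity)
  refine ⟨4 * 2 ^ pplus * pplus * K, by positivity, ?_⟩
  intro z ℓ hℓ hℓ₁ x hx a ha f hf hφf hat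
  have hvol : volume (Metric.closedBall z (ℓ / 2)) = ENNReal.ofReal (ℓ ^ n) := by
    rw [Real.volume_pi_closedBall z (by positivity), Fintype.card_fin,
      mul_div_cancel₀ ℓ two_ne_zero]
  have : IsFiniteMeasure (volume.restrict (Metric.closedBall z (ℓ / 2))) :=
    ⟨by simp [hvol]⟩
  have : NeZero (volume.restrict (Metric.closedBall z (ℓ / 2))) :=
    ⟨by simp [Measure.restrict_eq_zero, hvol, hℓ]⟩
  rw [Real.rpow_neg (by positivity), ← Real.rpow_natCast_mul hℓ.le] at hat
  rw [← Real.rpow_natCast_mul hℓ.le]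
  set ε := ℓ ^ ((n : ℝ) * m)
  set t := ⨍ y in Metric.closedBall z (ℓ / 2), |f y| ∂volume
  have hε₁ : ε ≤ 1 := Real.rpow_le_one hℓ.le hℓ₁ (by positivity)
  have ht : 0 ≤ t := average_nonneg fun y => abs_nonneg (f y)
  have hdist : ∀ y ∈ Metric.closedBall z (ℓ / 2), dist x y ≤ ℓ := fun y hy => by
    linarith [dist_triangle_right x y z, Metric.mem_closedBall.1 hx, Metric.mem_closedBall.1 hy]
  have hswap : ∀ y ∈ Metric.closedBall z (ℓ / 2), shiftedPower (p x) a (t / 2) ≤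
      pplus * K * shiftedPower (p y) a (t / 2) + pplus * ε := fun y hy =>
    shiftedPower_le_of_logHolder hlog hp1 hpp hℓ (hdist y hy) (by positivity) hε₁ ha
      (by positivity) (by linarith)
  have hjensen := le_mul_average_shiftedPower_add hp1 ha (by positivity)
    (fun y => abs_nonneg (f y)) hf.abs hφf
    (ae_restrict_of_forall_mem measurableSet_closedBall hswap)
  calc phiShift p a x t = shiftedPower (p x) a (2 * (t / 2)) := by
        rw [phiShift_eq_shiftedPower, mul_div_cancel₀ t two_ne_zero]
    _ ≤ 4 * 2 ^ p x * shiftedPower (p x) a (t / 2) :=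
        shiftedPower_two_mul_le (hp1 x) ha (by positivity)
    _ ≤ 4 * 2 ^ pplus * (pplus * K * ⨍ y in Metric.closedBall z (ℓ / 2),
          phiShift p a y |f y| ∂volume + pplus * ε) := by
        gcongr
        exacts [shiftedPower_nonneg (by linarith [hp1 x]) ha (by positivity), one_le_two, hpp x,
          hjensen]
    _ ≤ _ := by
        linarith [mul_nonneg (sub_nonneg.2 hK) (by positivity : 0 ≤ 4 * 2 ^ pplus * pplus * ε)]
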